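/- For Re(s) > 1 and any index (k_1,...,k_r), the Euler–Zagier type multiple zeta function admits the integral representation ζ(k_1,...,k_r;s) = (1/Γ(s)) ∫_0^∞ Li(k_1,...,k_r; e^{−t}) t^{s−1}/(e^t − 1) dt. -/

import Mathlib

open scoped BigOperators

namespace MZVPaper

/-- Strictly increasing tuples of positive integers of length `r`. -/
def Incr (r : ℕ) : Type := {m : Fin r → ℕ // StrictMono m ∧ ∀ i, 0 < m i}

/-- Multi-polylogarithm for a `Fin r`-indexed index. -/
noncomputable def LiF {r : ℕ} (k : Fin r → ℕ) (z : ℝ) : ℝ :=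
  ∑' m : Incr r,
    (if h : 0 < r then z ^ (m.1 ⟨r - 1, Nat.sub_lt h Nat.one_pos⟩) else 1) /
      ∏ i, (m.1 i : ℝ) ^ k i

/-- Multi-polylogarithm for a list index. -/
noncomputable def LiL (k : List ℕ) (z : ℝ) : ℝ := LiF (fun i => k.get i) z

/-- Multiple zeta value of a list index. -/
noncomputable def mzvL (k : List ℕ) : ℝ :=
  ∑' m : Incr k.length, 1 / ∏ i, (m.1 i : ℝ) ^ k.get i

/-- The word `e₁ e₀^{k₁-1} ⋯ e₁ e₀^{k_r-1}` of an index, `true = e₁`, `false = e₀`. -/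
def word (k : List ℕ) : List Bool := k.flatMap (fun ki => true :: List.replicate (ki - 1) false)

def toIndexAux (w : List Bool) : ℕ × List ℕ :=
  w.foldr (fun b p => if b then (0, (p.1 + 1) :: p.2) else (p.1 + 1, p.2)) (0, [])

/-- The index of a word in `e₁·Q⟨e₀,e₁⟩`. -/
def toIndex (w : List Bool) : List ℕ := (toIndexAux w).2

/-- Shuffle product of two words, as the list of shuffles (with multiplicity). -/
def sh : List Bool → List Bool → List (List Bool)
  | [], w => [w]
  | v, [] => [v]
  | a :: v, b :: w => ((sh v (b :: w)).map (a :: ·)) ++ ((sh (a :: v) w).map (b :: ·))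
  termination_by v w => v.length + w.length
  decreasing_by all_goals simp +arith +decide

/-- Dual index: reverse the word and exchange `e₀ ↔ e₁`. -/
def dualIdx (k : List ℕ) : List ℕ := toIndex (((word k).reverse).map (fun b => !b))

/-- `k₊`: add 1 to the last entry. -/
def plusIdx (k : List ℕ) : List ℕ := k.dropLast ++ [(k.getLast?.getD 0) + 1]

/-- `b(l;e) = ∏ C(lᵢ+eᵢ-1, eᵢ)`. -/
noncomputable def bcoef (l : List ℕ) (e : Fin l.length → ℕ) : ℝ :=
  ∏ i, (Nat.choose (l.get i + e i - 1) (e i) : ℝ)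

/-- Componentwise sum `l + e` as a list. -/
def addIdx (l : List ℕ) (e : Fin l.length → ℕ) : List ℕ := List.ofFn fun i => l.get i + e i

/-- Arakawa–Kaneko zeta function. -/
noncomputable def xiL (k : List ℕ) (s : ℂ) : ℂ :=
  (1 / Complex.Gamma s) *
    ∫ t in Set.Ioi (0 : ℝ),
      (LiL k (1 - Real.exp (-t)) : ℂ) * (t : ℂ) ^ (s - 1) / ((Real.exp t : ℂ) - 1)

/-- Euler–Zagier type multiple zeta function `ζ(k₁,…,k_r;s)`. -/
noncomputable def ezZeta (k : List ℕ) (s : ℂ) : ℂ :=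
  ∑' m : Incr (k.length + 1),
    1 / ((∏ i : Fin k.length, (m.1 i.castSucc : ℂ) ^ k.get i) *
      (m.1 (Fin.last k.length) : ℂ) ^ s)

/-- Generalized binomial coefficient `C(s+d-1, d)`. -/
noncomputable def genBinom (s : ℂ) (d : ℕ) : ℂ :=
  (∏ i ∈ Finset.range d, (s + (d : ℂ) - 1 - (i : ℂ))) / (d.factorial : ℂ)

/-- Strictly increasing tuples with the parity condition `mᵢ ≡ i (mod 2)` (1-based). -/
def IncrOdd (r : ℕ) : Type :=
  {m : Fin r → ℕ // StrictMono m ∧ ∀ i : Fin r, m i % 2 = (i.1 + 1) % 2}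

/-- Level-2 multi-polylogarithm `A(k;z)`. -/
noncomputable def AF (k : List ℕ) (z : ℝ) : ℝ :=
  2 ^ k.length * ∑' m : IncrOdd k.length,
    (if h : 0 < k.length then z ^ (m.1 ⟨k.length - 1, Nat.sub_lt h Nat.one_pos⟩) else 1) /
      ∏ i, (m.1 i : ℝ) ^ k.get i

open Filter Topology Set MeasureTheory

instance {r : ℕ} : Countable (Incr r) := by unfold Incr; infer_instance

instance : Unique (Incr 0) where
  default := ⟨fun i => i.elim0, fun a => a.elim0, fun i => i.elim0⟩
  uniq m := Subtype.ext (funext fun i => i.elim0)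

/-- Last entry of an increasing tuple (0 if empty). -/
def lastV {r : ℕ} (m : Incr r) : ℕ :=
  if h : 0 < r then m.1 ⟨r - 1, Nat.sub_lt h Nat.one_pos⟩ else 0

lemma le_lastV {r : ℕ} (m : Incr r) (i : Fin r) : m.1 i ≤ lastV m := by
  have hr : 0 < r := i.pos
  rw [lastV, dif_pos hr]
  refine m.2.1.monotone ?_
  rw [Fin.le_def]
  show i.1 ≤ r - 1
  omega

lemma lastV_succ {r : ℕ} (m : Incr (r + 1)) : lastV m = m.1 (Fin.last r) := by
  rw [lastV, dif_pos (Nat.succ_pos r)]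
  congr 1

lemma one_le_lastV {r : ℕ} (m : Incr (r + 1)) : 1 ≤ lastV m := by
  rw [lastV_succ]; exact m.2.2 _

/-- Extend an increasing tuple by one more entry `lastV m + n + 1`. -/
def ext1 {r : ℕ} (m : Incr r) (n : ℕ) : Incr (r + 1) := by
  refine ⟨Fin.snoc m.1 (lastV m + n + 1), ?_, ?_⟩
  · intro i j hij
    rcases eq_or_ne j (Fin.last r) with rfl | hj
    · obtain ⟨i', rfl⟩ := Fin.exists_castSucc_eq.mpr (ne_of_lt hij)
      rw [Fin.snoc_castSucc, Fin.snoc_last]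
      have := le_lastV m i'
      omega
    · obtain ⟨j', rfl⟩ := Fin.exists_castSucc_eq.mpr hj
      obtain ⟨i', rfl⟩ := Fin.exists_castSucc_eq.mpr
        (ne_of_lt (hij.trans_le (Fin.le_last _)))
      rw [Fin.snoc_castSucc, Fin.snoc_castSucc]
      exact m.2.1 (Fin.castSucc_lt_castSucc_iff.mp hij)
  · intro i
    rcases eq_or_ne i (Fin.last r) with rfl | hi
    · rw [Fin.snoc_last]; omega
    · obtain ⟨i', rfl⟩ := Fin.exists_castSucc_eq.mpr hi
      rw [Fin.snoc_castSucc]; exact m.2.2 i'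

@[simp] lemma ext1_castSucc {r : ℕ} (m : Incr r) (n : ℕ) (i : Fin r) :
    (ext1 m n).1 i.castSucc = m.1 i := by
  show (Fin.snoc m.1 (lastV m + n + 1) : Fin (r+1) → ℕ) i.castSucc = m.1 i
  exact Fin.snoc_castSucc _ _ _

@[simp] lemma ext1_last {r : ℕ} (m : Incr r) (n : ℕ) :
    (ext1 m n).1 (Fin.last r) = lastV m + n + 1 := by
  show (Fin.snoc m.1 (lastV m + n + 1) : Fin (r+1) → ℕ) (Fin.last r) = lastV m + n + 1
  exact Fin.snoc_last _ _

/-- Restriction of an increasing tuple to its first `r` entries. -/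
def res1 {r : ℕ} (m : Incr (r + 1)) : Incr r :=
  ⟨Fin.init m.1, fun _ _ h => m.2.1 (Fin.castSucc_lt_castSucc_iff.mpr h),
    fun i => m.2.2 i.castSucc⟩

lemma lastV_res_lt {r : ℕ} (m : Incr (r + 1)) : lastV (res1 m) < m.1 (Fin.last r) := by
  rcases Nat.eq_zero_or_pos r with rfl | hr
  · rw [lastV, dif_neg (lt_irrefl 0)]
    exact m.2.2 _
  · rw [lastV, dif_pos hr]
    exact m.2.1 (by rw [Fin.lt_def]; simp; omega)

/-- The basic equivalence `Incr r × ℕ ≃ Incr (r+1)`. -/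
def incrEquiv (r : ℕ) : Incr r × ℕ ≃ Incr (r + 1) where
  toFun z := ext1 z.1 z.2
  invFun m := (res1 m, m.1 (Fin.last r) - lastV (res1 m) - 1)
  left_inv := by
    rintro ⟨m, n⟩
    have h1 : res1 (ext1 m n) = m := by
      apply Subtype.ext
      show Fin.init (Fin.snoc m.1 (lastV m + n + 1) : Fin (r+1) → ℕ) = m.1
      exact Fin.init_snoc _ _
    refine Prod.ext h1 ?_
    show (ext1 m n).1 (Fin.last r) - lastV (res1 (ext1 m n)) - 1 = n
    rw [h1, ext1_last]; omega
  right_inv := by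
    intro m
    apply Subtype.ext
    have h := lastV_res_lt m
    show (Fin.snoc (res1 m).1 (lastV (res1 m) + (m.1 (Fin.last r) - lastV (res1 m) - 1) + 1) : Fin (r+1) → ℕ) = m.1
    rw [show lastV (res1 m) + (m.1 (Fin.last r) - lastV (res1 m) - 1) + 1
        = m.1 (Fin.last r) from by omega]
    exact Fin.snoc_init_self m.1

lemma lastV_ext1 {r : ℕ} (m : Incr r) (n : ℕ) : lastV (ext1 m n) = lastV m + n + 1 := by
  rw [lastV_succ, ext1_last]

@[simp] lemma incrEquiv_apply {r : ℕ} (m : Incr r) (n : ℕ) :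
    incrEquiv r (m, n) = ext1 m n := rfl

lemma one_le_prod_incr {r : ℕ} (m : Incr r) (k : Fin r → ℕ) :
    (1 : ℝ) ≤ ∏ i, (m.1 i : ℝ) ^ k i := by
  have h := Finset.prod_le_prod (s := Finset.univ) (f := fun _ : Fin r => (1:ℝ))
    (g := fun i => (m.1 i : ℝ) ^ k i) (fun i _ => zero_le_one)
    (fun i _ => one_le_pow₀ (Nat.one_le_cast.mpr (m.2.2 i)))
  simpa using h

set_option maxHeartbeats 1000000 in
lemma summable_li : ∀ {r : ℕ} (k : Fin r → ℕ) {x : ℝ}, 0 ≤ x → x < 1 →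
    Summable fun m : Incr r => x ^ lastV m / ∏ i, (m.1 i : ℝ) ^ k i
  | 0, _, _, _, _ => .of_finite
  | (r+1), k, x, hx0, hx1 => by
    have ih := summable_li (fun i : Fin r => k i.castSucc) hx0 hx1
    rw [← (incrEquiv r).summable_iff]
    have hgeo : Summable fun n : ℕ => x ^ (n + 1) :=
      (summable_nat_add_iff 1).mpr (summable_geometric_of_lt_one hx0 hx1)
    have hb : Summable fun z : Incr r × ℕ =>
        (x ^ lastV z.1 / ∏ i, (z.1.1 i : ℝ) ^ k i.castSucc) * x ^ (z.2 + 1) :=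
      by
      apply Summable.mul_of_nonneg ih hgeo
      · exact fun m => div_nonneg (pow_nonneg hx0 _) (by positivity)
      · exact fun n => pow_nonneg hx0 _
    refine Summable.of_nonneg_of_le (fun z => ?_) (fun z => ?_) hb
    · obtain ⟨m, n⟩ := z
      simp only [Function.comp_apply, incrEquiv_apply]
      exact div_nonneg (pow_nonneg hx0 _) (by positivity)
    · obtain ⟨m, n⟩ := z
      simp only [Function.comp_apply, incrEquiv_apply]
      rw [lastV_ext1, Fin.prod_univ_castSucc]
      simp only [ext1_castSucc, ext1_last]
      rw [show lastV m + n + 1 = lastV m + (n + 1) from by omega, pow_add,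
        div_mul_eq_mul_div, div_eq_mul_inv, div_eq_mul_inv]
      refine mul_le_mul_of_nonneg_left ?_
        (mul_nonneg (pow_nonneg hx0 _) (pow_nonneg hx0 _))
      have hP : (0 : ℝ) < ∏ i, (m.1 i : ℝ) ^ k i.castSucc :=
        lt_of_lt_of_le one_pos (one_le_prod_incr m _)
      have hL : (1 : ℝ) ≤ ((lastV m + n + 1 : ℕ) : ℝ) ^ k (Fin.last r) :=
        one_le_pow₀ (by exact_mod_cast Nat.one_le_iff_ne_zero.mpr (by omega))
      exact inv_anti₀ hP (le_mul_of_one_le_right hP.le hL)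

set_option maxHeartbeats 2000000 in
lemma summable_aux : ∀ {r : ℕ} (k : Fin r → ℕ), (∀ i, 0 < k i) → ∀ {σ : ℝ}, 1 < σ →
    Summable fun m : Incr (r + 1) =>
      (∏ i : Fin r, (m.1 i.castSucc : ℝ) ^ k i)⁻¹ * ((m.1 (Fin.last r) : ℝ) ^ σ)⁻¹
  | 0, k, hk, σ, hσ => by
    have h0 : Summable fun n : ℕ => ((n : ℝ) ^ σ)⁻¹ := by
      simpa only [one_div] using Real.summable_one_div_nat_rpow.mpr hσ
    have hinj : Function.Injective (fun m : Incr 1 => m.1 (Fin.last 0)) := by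
      intro a b h
      exact Subtype.ext (funext fun i => by rw [Subsingleton.elim i (Fin.last 0)]; exact h)
    have := h0.comp_injective hinj
    simp only [Finset.univ_eq_empty, Finset.prod_empty, inv_one, one_mul]
    exact this
  | (r+1), k, hk, σ, hσ => by
    have hτ : 1 < (σ + 1) / 2 := by linarith
    have hδ : 0 < (σ - 1) / 2 := by linarith
    have hσ0 : (0:ℝ) ≤ σ := by linarith
    have ih := summable_aux (fun i : Fin r => k i.castSucc) (fun i => hk _) hτ
    rw [← (incrEquiv (r+1)).summable_iff]
    have hcomp : ((fun m : Incr (r + 2) =>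
        (∏ i : Fin (r+1), (m.1 i.castSucc : ℝ) ^ k i)⁻¹ *
          ((m.1 (Fin.last (r+1)) : ℝ) ^ σ)⁻¹) ∘ (incrEquiv (r+1))) =
        fun z : Incr (r+1) × ℕ => (∏ i : Fin (r+1), (z.1.1 i : ℝ) ^ k i)⁻¹ *
          (((lastV z.1 + z.2 + 1 : ℕ) : ℝ) ^ σ)⁻¹ := by
      funext z
      obtain ⟨m, n⟩ := z
      simp only [Function.comp_apply, incrEquiv_apply, ext1_castSucc, ext1_last]
    rw [hcomp]
    have hnn : (0 : Incr (r+1) × ℕ → ℝ) ≤ fun z : Incr (r+1) × ℕ =>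
        (∏ i : Fin (r+1), (z.1.1 i : ℝ) ^ k i)⁻¹ *
          (((lastV z.1 + z.2 + 1 : ℕ) : ℝ) ^ σ)⁻¹ := by
      intro z
      positivity
    rw [summable_prod_of_nonneg hnn]
    have hsumτ : Summable fun n : ℕ => (((n + 1 : ℕ) : ℝ) ^ ((σ + 1) / 2))⁻¹ := by
      have h0 : Summable fun n : ℕ => ((n : ℝ) ^ ((σ + 1) / 2))⁻¹ := by
        simpa only [one_div] using Real.summable_one_div_nat_rpow.mpr hτ
      exact (summable_nat_add_iff 1).mpr h0
    have hsum1 : Summable fun n : ℕ => (((n + 1 : ℕ) : ℝ) ^ σ)⁻¹ := by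
      have h0 : Summable fun n : ℕ => ((n : ℝ) ^ σ)⁻¹ := by
        simpa only [one_div] using Real.summable_one_div_nat_rpow.mpr hσ
      exact (summable_nat_add_iff 1).mpr h0
    have key : ∀ (M c n : ℕ), 1 ≤ M → 1 ≤ c →
        (((M : ℝ)) ^ c)⁻¹ * (((M + n + 1 : ℕ) : ℝ) ^ σ)⁻¹ ≤
          (((M : ℝ)) ^ ((σ + 1) / 2))⁻¹ * ((((n + 1 : ℕ)) : ℝ) ^ ((σ + 1) / 2))⁻¹ := by
      intro M c n hM hc
      have hM1 : (1:ℝ) ≤ (M:ℝ) := by exact_mod_cast hM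
      have hMpos : (0:ℝ) < (M:ℝ) := by linarith
      have hL0 : (0:ℝ) < ((M + n + 1 : ℕ) : ℝ) := by positivity
      have hn0 : (0:ℝ) < (((n + 1 : ℕ)) : ℝ) := by positivity
      rw [← mul_inv, ← mul_inv]
      have hsplit : ((M + n + 1 : ℕ) : ℝ) ^ σ =
          ((M + n + 1 : ℕ) : ℝ) ^ ((σ - 1) / 2) * ((M + n + 1 : ℕ) : ℝ) ^ ((σ + 1) / 2) := by
        rw [← Real.rpow_add hL0]; ring_nf
      have h3 : (M : ℝ) ^ ((σ + 1) / 2) = (M : ℝ) ^ (1:ℝ) * (M : ℝ) ^ ((σ - 1) / 2) := by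
        rw [← Real.rpow_add hMpos]; ring_nf
      have hMc : (M:ℝ) ^ (1:ℝ) ≤ (M:ℝ) ^ c := by
        rw [← Real.rpow_natCast (M:ℝ) c]
        exact Real.rpow_le_rpow_of_exponent_le hM1 (by exact_mod_cast hc)
      have h1 : (M:ℝ) ^ ((σ - 1) / 2) ≤ ((M + n + 1 : ℕ) : ℝ) ^ ((σ - 1) / 2) :=
        Real.rpow_le_rpow hMpos.le (by exact_mod_cast (by omega : M ≤ M + n + 1)) hδ.le
      have h2 : (((n + 1 : ℕ)) : ℝ) ^ ((σ + 1) / 2) ≤ ((M + n + 1 : ℕ) : ℝ) ^ ((σ + 1) / 2) :=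
        Real.rpow_le_rpow hn0.le (by exact_mod_cast (by omega : n + 1 ≤ M + n + 1))
          (by linarith)
      have hle : (M : ℝ) ^ ((σ + 1) / 2) * (((n + 1 : ℕ)) : ℝ) ^ ((σ + 1) / 2) ≤
          (M:ℝ) ^ c * ((M + n + 1 : ℕ) : ℝ) ^ σ := by
        rw [hsplit, h3]
        calc (M : ℝ) ^ (1:ℝ) * (M : ℝ) ^ ((σ - 1) / 2) * (((n + 1 : ℕ)) : ℝ) ^ ((σ + 1) / 2)
            ≤ (M:ℝ) ^ c * (((M + n + 1 : ℕ) : ℝ) ^ ((σ - 1) / 2)) *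
              (((M + n + 1 : ℕ) : ℝ) ^ ((σ + 1) / 2)) := by
              apply mul_le_mul (mul_le_mul hMc h1 (by positivity) (by positivity)) h2
                (by positivity) (by positivity)
          _ = (M:ℝ) ^ c * (((M + n + 1 : ℕ) : ℝ) ^ ((σ - 1) / 2) *
              ((M + n + 1 : ℕ) : ℝ) ^ ((σ + 1) / 2)) := by ring
      exact inv_anti₀
        (mul_pos (Real.rpow_pos_of_pos hMpos _) (Real.rpow_pos_of_pos hn0 _)) hle
    have hA : ∀ m : Incr (r+1), Summable fun n : ℕ =>
        (∏ i : Fin (r+1), (m.1 i : ℝ) ^ k i)⁻¹ * (((lastV m + n + 1 : ℕ) : ℝ) ^ σ)⁻¹ := by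
      intro m
      refine Summable.of_nonneg_of_le (fun n => by positivity) (fun n => ?_)
        (hsum1.mul_left (∏ i : Fin (r+1), (m.1 i : ℝ) ^ k i)⁻¹)
      refine mul_le_mul_of_nonneg_left ?_ (by positivity)
      refine inv_anti₀ (Real.rpow_pos_of_pos (by positivity) _) ?_
      exact Real.rpow_le_rpow (by positivity)
        (by exact_mod_cast (by omega : n + 1 ≤ lastV m + n + 1)) hσ0
    constructor
    · exact hA
    · refine Summable.of_nonneg_of_le (fun m => tsum_nonneg fun n => by positivity)
        (fun m => ?_)
        (ih.mul_left (∑' n : ℕ, (((n + 1 : ℕ) : ℝ) ^ ((σ + 1) / 2))⁻¹))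
      have hM : lastV m = m.1 (Fin.last r) := lastV_succ m
      have hprod : ∏ i : Fin (r+1), (m.1 i : ℝ) ^ k i =
          (∏ i : Fin r, (m.1 i.castSucc : ℝ) ^ k i.castSucc) *
            (m.1 (Fin.last r) : ℝ) ^ k (Fin.last r) :=
        Fin.prod_univ_castSucc fun i => (m.1 i : ℝ) ^ k i
      have hpern : ∀ n : ℕ,
          (∏ i : Fin (r+1), (m.1 i : ℝ) ^ k i)⁻¹ * (((lastV m + n + 1 : ℕ) : ℝ) ^ σ)⁻¹ ≤
          ((∏ i : Fin r, (m.1 i.castSucc : ℝ) ^ k i.castSucc)⁻¹ *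
            ((m.1 (Fin.last r) : ℝ) ^ ((σ + 1) / 2))⁻¹) *
            ((((n + 1 : ℕ)) : ℝ) ^ ((σ + 1) / 2))⁻¹ := by
        intro n
        rw [hprod, hM, mul_inv, mul_assoc, mul_assoc]
        exact mul_le_mul_of_nonneg_left
          (key (m.1 (Fin.last r)) (k (Fin.last r)) n (m.2.2 _) (hk _)) (by positivity)
      calc ∑' n : ℕ, (∏ i : Fin (r+1), (m.1 i : ℝ) ^ k i)⁻¹ *
            (((lastV m + n + 1 : ℕ) : ℝ) ^ σ)⁻¹
          ≤ ∑' n : ℕ, ((∏ i : Fin r, (m.1 i.castSucc : ℝ) ^ k i.castSucc)⁻¹ *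
              ((m.1 (Fin.last r) : ℝ) ^ ((σ + 1) / 2))⁻¹) *
              ((((n + 1 : ℕ)) : ℝ) ^ ((σ + 1) / 2))⁻¹ :=
            Summable.tsum_le_tsum hpern (hA m) (hsumτ.mul_left _)
        _ = (∑' n : ℕ, (((n + 1 : ℕ) : ℝ) ^ ((σ + 1) / 2))⁻¹) *
              ((∏ i : Fin r, (m.1 i.castSucc : ℝ) ^ k i.castSucc)⁻¹ *
                ((m.1 (Fin.last r) : ℝ) ^ ((σ + 1) / 2))⁻¹) := by
            rw [tsum_mul_left]; ring

lemma LiF_eq {r : ℕ} (k : Fin r → ℕ) (x : ℝ) :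
    LiF k x = ∑' m : Incr r, x ^ lastV m / ∏ i, (m.1 i : ℝ) ^ k i := by
  unfold LiF lastV
  by_cases h : 0 < r <;> simp [h]

lemma hasSum_LiL (k : List ℕ) {x : ℝ} (hx0 : 0 ≤ x) (hx1 : x < 1) :
    HasSum (fun m : Incr k.length => x ^ lastV m / ∏ i, (m.1 i : ℝ) ^ k.get i)
      (LiL k x) := by
  rw [LiL, LiF_eq]
  exact (summable_li _ hx0 hx1).hasSum

set_option maxHeartbeats 2000000 in
theorem stmt9' (k : List ℕ) (hk : ∀ x ∈ k, 0 < x) (s : ℂ) (hs : 1 < s.re) :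
    ezZeta k s = (1 / Complex.Gamma s) *
      ∫ t in Set.Ioi (0 : ℝ),
        (LiL k (Real.exp (-t)) : ℂ) * (t : ℂ) ^ (s - 1) / ((Real.exp t : ℂ) - 1) := by
  set r := k.length with hr
  have hk' : ∀ i : Fin r, 0 < k.get i := fun i => hk _ (List.get_mem k i)
  set a : Incr (r+1) → ℂ :=
    fun m => (∏ i : Fin r, (m.1 i.castSucc : ℂ) ^ k.get i)⁻¹ with ha
  set p : Incr (r+1) → ℝ := fun m => (m.1 (Fin.last r) : ℝ) with hp
  set F : ℝ → ℂ :=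
    fun t => (LiL k (Real.exp (-t)) : ℂ) / ((Real.exp t : ℂ) - 1) with hF
  have hs0 : 0 < s.re := by linarith
  have hpos : ∀ m : Incr (r+1), a m = 0 ∨ 0 < p m := fun m =>
    Or.inr (show (0:ℝ) < (m.1 (Fin.last r) : ℝ) by exact_mod_cast m.2.2 (Fin.last r))
  -- summability hypothesis
  have h_sum : Summable fun m : Incr (r+1) => ‖a m‖ / p m ^ s.re := by
    refine (summable_aux (fun i : Fin r => k.get i) hk' hs).congr fun m => ?_
    have hnorm : ‖a m‖ = (∏ i : Fin r, (m.1 i.castSucc : ℝ) ^ k.get i)⁻¹ := by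
      rw [ha]
      simp [norm_prod]
    rw [hnorm, hp, div_eq_mul_inv]
  -- the Mellin integrand
  have hFsum : ∀ t ∈ Set.Ioi (0:ℝ),
      HasSum (fun m : Incr (r+1) => a m * (Real.exp (-p m * t) : ℂ)) (F t) := by
    intro t ht
    have ht0 : (0:ℝ) < t := ht
    set x := Real.exp (-t) with hx
    have hx0 : 0 < x := Real.exp_pos _
    have hx1 : x < 1 := Real.exp_lt_one_iff.mpr (by linarith)
    have hE1 : (1:ℝ) < Real.exp t := Real.one_lt_exp_iff.mpr ht0
    -- HasSum for the polylogarithm factor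
    have hLiC : HasSum
        (fun m : Incr r => ((x ^ lastV m / ∏ i, (m.1 i : ℝ) ^ k.get i : ℝ) : ℂ))
        ((LiL k x : ℝ) : ℂ) := Complex.hasSum_ofReal.mpr (hasSum_LiL k hx0.le hx1)
    -- HasSum for the geometric factor
    have hgR : HasSum (fun n : ℕ => x ^ (n+1)) ((Real.exp t - 1)⁻¹) := by
      have h0 := hasSum_geometric_of_lt_one hx0.le hx1
      have h1 := h0.mul_left x
      simp only [← pow_succ'] at h1
      convert h1 using 1
      · rfl
      rw [hx, Real.exp_neg, ← mul_inv]
      have hE : Real.exp t ≠ 0 := (Real.exp_pos t).ne'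
      congr 1
      rw [mul_sub, mul_inv_cancel₀ hE, mul_one]
    have hgC : HasSum (fun n : ℕ => ((x ^ (n+1) : ℝ) : ℂ))
        (((Real.exp t - 1)⁻¹ : ℝ) : ℂ) := Complex.hasSum_ofReal.mpr hgR
    -- product
    have hsummul : Summable fun z : Incr r × ℕ =>
        ((x ^ lastV z.1 / ∏ i, (z.1.1 i : ℝ) ^ k.get i : ℝ) : ℂ) *
          ((x ^ (z.2+1) : ℝ) : ℂ) := by
      apply summable_mul_of_summable_norm (f := fun m : Incr r =>
          ((x ^ lastV m / ∏ i, (m.1 i : ℝ) ^ k.get i : ℝ) : ℂ))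
        (g := fun n : ℕ => ((x ^ (n+1) : ℝ) : ℂ))
      · refine ((summable_li (fun i : Fin r => k.get i) hx0.le hx1).abs).congr fun m => ?_
        rw [Complex.norm_real, Real.norm_eq_abs]
      · refine (((summable_nat_add_iff 1).mpr
          (summable_geometric_of_lt_one hx0.le hx1)).abs).congr fun n => ?_
        rw [Complex.norm_real, Real.norm_eq_abs]
    have hprod := hLiC.mul hgC hsummul
    -- transport along the equivalence
    rw [← (incrEquiv r).hasSum_iff]
    have hfun : ((fun m : Incr (r+1) => a m * (Real.exp (-p m * t) : ℂ))
        ∘ (incrEquiv r)) = fun z : Incr r × ℕ =>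
          ((x ^ lastV z.1 / ∏ i, (z.1.1 i : ℝ) ^ k.get i : ℝ) : ℂ) *
            ((x ^ (z.2+1) : ℝ) : ℂ) := by
      funext z
      obtain ⟨m, n⟩ := z
      simp only [Function.comp_apply, incrEquiv_apply, ha, hp]
      rw [show ((ext1 m n).1 (Fin.last r) : ℝ) = ((lastV m + n + 1 : ℕ) : ℝ) from by
        rw [ext1_last]]
      rw [show -((lastV m + n + 1 : ℕ) : ℝ) * t = ((lastV m + n + 1 : ℕ) : ℝ) * (-t) from
        by ring, Real.exp_nat_mul, ← hx, show lastV m + n + 1 = lastV m + (n + 1) from by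
        omega, pow_add]
      have hprodeq : ∏ i : Fin r, ((ext1 m n).1 i.castSucc : ℂ) ^ k.get i =
          ∏ i : Fin r, (m.1 i : ℂ) ^ k.get i := by
        apply Finset.prod_congr rfl
        intro i _
        rw [ext1_castSucc]
      rw [hprodeq]
      push_cast
      have hP : (∏ i : Fin r, ((m.1 i : ℕ) : ℂ) ^ k.get i) ≠ 0 := by
        apply Finset.prod_ne_zero_iff.mpr
        intro i _
        exact pow_ne_zero _ (Nat.cast_ne_zero.mpr (m.2.2 i).ne')
      field_simp
    rw [hfun]
    have hFval : F t = ((LiL k x : ℝ) : ℂ) * (((Real.exp t - 1)⁻¹ : ℝ) : ℂ) := by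
      show (LiL k (Real.exp (-t)) : ℂ) / ((Real.exp t : ℂ) - 1) = _
      rw [← hx]
      push_cast
      rw [div_eq_mul_inv]
    rw [hFval]
    exact hprod
  have main := (hasSum_mellin hpos hs0 hFsum h_sum).tsum_eq
  have hG : Complex.Gamma s ≠ 0 := by
    apply Complex.Gamma_ne_zero
    intro n hn
    rw [hn] at hs
    simp only [Complex.neg_re, Complex.natCast_re] at hs
    have : (0:ℝ) ≤ (n:ℝ) := Nat.cast_nonneg n
    linarith
  have hz : Complex.Gamma s * ezZeta k s = mellin F s := by
    rw [← main]
    rw [ezZeta, ← tsum_mul_left]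
    apply tsum_congr
    intro m
    simp only [ha, hp]
    rw [show ((((m.1 (Fin.last r) : ℕ) : ℝ)) : ℂ) = ((m.1 (Fin.last r) : ℕ) : ℂ) from
      Complex.ofReal_natCast _]
    rw [one_div, mul_inv, div_eq_mul_inv]
    ring
  have hmel : mellin F s = ∫ t in Set.Ioi (0:ℝ),
      (LiL k (Real.exp (-t)) : ℂ) * (t : ℂ) ^ (s - 1) / ((Real.exp t : ℂ) - 1) := by
    unfold mellin
    congr 1
    funext t
    rw [hF, smul_eq_mul]
    ring
  rw [hmel] at hz
  rw [← hz, one_div, inv_mul_cancel_left₀ hG]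

/-- Integral representation of the Euler–Zagier type multiple zeta function
for `Re(s) > 1`. -/
theorem stmt9 (k : List ℕ) (hk : ∀ x ∈ k, 0 < x) (s : ℂ) (hs : 1 < s.re) :
    ezZeta k s = (1 / Complex.Gamma s) *
      ∫ t in Set.Ioi (0 : ℝ),
        (LiL k (Real.exp (-t)) : ℂ) * (t : ℂ) ^ (s - 1) / ((Real.exp t : ℂ) - 1) := by
  exact stmt9' k hk s hs

end MZVPaper
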